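/- arXiv:2410.02192 — 3 statements merged into one kernel-verified Lean document; each statement's English description precedes it below -/
import Mathlib

section
/- Let F ∈ ℝ^{n×n} be symmetric positive definite and T ∈ ℝ^{m×n} (m ≤ n) have full row rank. Then every eigenvalue of the block matrix A = [[-F, -Tᵀ],[T, 0]] has strictly negative real part (A is Hurwitz). -/
/-!
For an eigenvector `(x, y)` of `[[-F, -Tᴴ], [T, 0]]` with eigenvalue `s`, pairing the two block
rows with `x` and `y` and adding gives `s (‖x‖² + ‖y‖²) = -x*Fx + (y*Tx - x*Tᴴy)`. The two coupling
terms are complex conjugates, so on real parts `Re s (‖x‖² + ‖y‖²) = -Re (x*Fx)`. Here `x ≠ 0`,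
since otherwise `Tᴴy = 0` and injectivity of `Tᴴ` (full row rank of `T`) forces `y = 0`; hence
`Re s < 0`. Complexifying the real `F` and `T` preserves positive definiteness of `F` and
injectivity of `Tᴴ`.
-/

open Matrix
open scoped ComplexOrder

namespace Matrix

variable {𝕜 ι κ : Type*} [RCLike 𝕜] [Fintype ι] [Fintype κ]

theorem re_star_dotProduct_mulVec_sub_conjTranspose (T : Matrix κ ι 𝕜) (x : ι → 𝕜) (y : κ → 𝕜) :
    RCLike.re (star y ⬝ᵥ T *ᵥ x - star x ⬝ᵥ Tᴴ *ᵥ y) = 0 := by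
  rw [dotProduct_mulVec (star x), ← star_mulVec, star_dotProduct, map_sub, RCLike.star_def,
    RCLike.conj_re, sub_self]

theorem re_lt_zero_of_saddle_point_eigenpair {F : Matrix ι ι 𝕜} (hF : F.PosDef) {T : Matrix κ ι 𝕜}
    (hT : Function.Injective Tᴴ.mulVec) {s : 𝕜} {x : ι → 𝕜} {y : κ → 𝕜} (hxy : x ≠ 0 ∨ y ≠ 0)
    (h₁ : -F *ᵥ x + -Tᴴ *ᵥ y = s • x) (h₂ : T *ᵥ x = s • y) : RCLike.re s < 0 := by
  have hx : x ≠ 0 := by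
    rintro rfl
    refine hxy.resolve_left (not_not.2 rfl) (hT ?_)
    simpa [neg_mulVec] using h₁
  have hnorm : 0 < star x ⬝ᵥ x + star y ⬝ᵥ y :=
    add_pos_of_pos_of_nonneg (dotProduct_star_self_pos_iff.2 hx) (dotProduct_star_self_nonneg y)
  have hpair : s * (star x ⬝ᵥ x + star y ⬝ᵥ y) =
      -(star x ⬝ᵥ F *ᵥ x) + (star y ⬝ᵥ T *ᵥ x - star x ⬝ᵥ Tᴴ *ᵥ y) := by
    calc s * (star x ⬝ᵥ x + star y ⬝ᵥ y) = star x ⬝ᵥ (s • x) + star y ⬝ᵥ (s • y) := by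
          simp only [dotProduct_smul, smul_eq_mul, mul_add]
      _ = _ := by
          rw [← h₁, ← h₂, dotProduct_add, neg_mulVec, neg_mulVec, dotProduct_neg, dotProduct_neg]
          ring
  obtain ⟨hnorm_re, hnorm_im⟩ := RCLike.pos_iff.1 hnorm
  have hre := congrArg RCLike.re hpair
  rw [RCLike.mul_re, hnorm_im, mul_zero, sub_zero, map_add RCLike.re (-_), map_neg,
    re_star_dotProduct_mulVec_sub_conjTranspose, add_zero] at hre
  nlinarith [hF.re_dotProduct_pos hx]

theorem re_lt_zero_of_mem_spectrum_fromBlocks [DecidableEq ι] [DecidableEq κ]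
    {F : Matrix ι ι 𝕜} (hF : F.PosDef) {T : Matrix κ ι 𝕜}
    (hT : Function.Injective Tᴴ.mulVec) {s : 𝕜}
    (hs : s ∈ spectrum 𝕜 (fromBlocks (-F) (-Tᴴ) T 0)) : RCLike.re s < 0 := by
  rw [← spectrum_toLin', ← Module.End.hasEigenvalue_iff_mem_spectrum] at hs
  obtain ⟨v, hv⟩ := hs.exists_hasEigenvector
  obtain ⟨x, y, rfl⟩ : ∃ x y, v = Sum.elim x y := ⟨_, _, (Sum.elim_comp_inl_inr v).symm⟩
  rw [Module.End.hasEigenvector_iff, Module.End.mem_eigenspace_iff, toLin'_apply,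
    fromBlocks_mulVec] at hv
  obtain ⟨hv, hv0⟩ := hv
  refine re_lt_zero_of_saddle_point_eigenpair hF hT ?_
    (funext fun i ↦ by simpa using congrFun hv (.inl i))
    (funext fun i ↦ by simpa using congrFun hv (.inr i))
  by_contra! h
  exact hv0 (by rw [h.1, h.2]; ext (_ | _) <;> rfl)

theorem re_star_dotProduct_map_mulVec (F : Matrix ι ι ℝ) (x : ι → 𝕜) :
    RCLike.re (star x ⬝ᵥ F.map (algebraMap ℝ 𝕜) *ᵥ x) =
      (fun i ↦ RCLike.re (x i)) ⬝ᵥ F *ᵥ (fun i ↦ RCLike.re (x i)) +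
        (fun i ↦ RCLike.im (x i)) ⬝ᵥ F *ᵥ (fun i ↦ RCLike.im (x i)) := by
  simp only [dotProduct, mulVec, map_sum, Finset.mul_sum, ← Finset.sum_add_distrib]
  refine Finset.sum_congr rfl fun i _ ↦ Finset.sum_congr rfl fun j _ ↦ ?_
  simp [RCLike.mul_re]

theorem PosDef.map_algebraMap {F : Matrix ι ι ℝ} (hF : F.PosDef) :
    (F.map (algebraMap ℝ 𝕜)).PosDef := by
  have hF' : (F.map (algebraMap ℝ 𝕜)).IsHermitian := hF.1.map _ fun r ↦ by simp
  refine .of_dotProduct_mulVec_pos hF' fun x hx ↦ RCLike.pos_iff.2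
    ⟨?_, hF'.im_star_dotProduct_mulVec_self x⟩
  rw [re_star_dotProduct_map_mulVec]
  set a := fun i ↦ RCLike.re (x i)
  set b := fun i ↦ RCLike.im (x i)
  have ha := hF.posSemidef.dotProduct_mulVec_nonneg a
  have hb := hF.posSemidef.dotProduct_mulVec_nonneg b
  simp only [star_trivial] at ha hb
  obtain hab | hab : a ≠ 0 ∨ b ≠ 0 := by
    by_contra! hab
    exact hx <| funext fun i ↦
      RCLike.ext (by simpa using congrFun hab.1 i) (by simpa using congrFun hab.2 i)
  all_goals
    have hpos := hF.dotProduct_mulVec_pos hab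
    simp only [star_trivial] at hpos
    linarith

theorem exists_mul_eq_one_of_rank_eq_card {K : Type*} [Field K] [DecidableEq κ]
    {T : Matrix κ ι K} (hT : T.rank = Fintype.card κ) : ∃ B : Matrix ι κ K, T * B = 1 := by
  rw [← mulVec_surjective_iff_exists_right_inverse, ← coe_mulVecLin, ← LinearMap.range_eq_top]
  apply Submodule.eq_top_of_finrank_eq
  rw [← rank, hT, Module.finrank_fintype_fun_eq_card]

theorem mulVec_injective_conjTranspose_map_of_rank_eq_card [DecidableEq κ] {T : Matrix κ ι ℝ}
    (hT : T.rank = Fintype.card κ) :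
    Function.Injective (T.map (algebraMap ℝ 𝕜))ᴴ.mulVec := by
  obtain ⟨B, hB⟩ := exists_mul_eq_one_of_rank_eq_card hT
  have hB' : (B.map (algebraMap ℝ 𝕜))ᴴ * (T.map (algebraMap ℝ 𝕜))ᴴ = 1 := by
    rw [← conjTranspose_mul, ← Matrix.map_mul, hB, Matrix.map_one _ (map_zero _) (map_one _),
      conjTranspose_one]
  intro u v huv
  simpa [mulVec_mulVec, hB'] using congrArg ((B.map (algebraMap ℝ 𝕜))ᴴ *ᵥ ·) huv

end Matrix

theorem hurwitz_block_matrix_general (n m : ℕ)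
    (F : Matrix (Fin n) (Fin n) ℝ) (hF : F.PosDef)
    (T : Matrix (Fin m) (Fin n) ℝ) (hT : T.rank = m)
    (A : Matrix (Fin n ⊕ Fin m) (Fin n ⊕ Fin m) ℝ)
    (hA : A = Matrix.fromBlocks (-F) (-Tᵀ) T 0) :
    ∀ s ∈ spectrum ℂ (A.map (algebraMap ℝ ℂ)), s.re < 0 := by
  intro s hs
  have hA' : A.map (algebraMap ℝ ℂ) = fromBlocks (-F.map (algebraMap ℝ ℂ))
      (-(T.map (algebraMap ℝ ℂ))ᴴ) (T.map (algebraMap ℝ ℂ)) 0 := by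
    subst hA
    rw [fromBlocks_map, Matrix.map_neg _ (map_neg _), Matrix.map_neg _ (map_neg _),
      Matrix.map_zero _ (map_zero _), ← conjTranspose_eq_transpose_of_trivial,
      conjTranspose_map _ fun r ↦ by simp]
  rw [hA'] at hs
  exact re_lt_zero_of_mem_spectrum_fromBlocks hF.map_algebraMap
    (mulVec_injective_conjTranspose_map_of_rank_eq_card (by rwa [Fintype.card_fin])) hs

theorem hurwitz_block_matrix (n m : ℕ) (hm : m ≤ n)
    (F : Matrix (Fin n) (Fin n) ℝ) (hF : F.PosDef)
    (T : Matrix (Fin m) (Fin n) ℝ) (hT : T.rank = m)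
    (A : Matrix (Fin n ⊕ Fin m) (Fin n ⊕ Fin m) ℝ)
    (hA : A = Matrix.fromBlocks (-F) (-Tᵀ) T 0) :
    ∀ s ∈ spectrum ℂ (A.map (algebraMap ℝ ℂ)), s.re < 0 :=
  hurwitz_block_matrix_general n m F hF T hT A hA
end

section
/- Let F ∈ ℝ^{n×n} be symmetric positive definite and T ∈ ℝ^{m×n} have full row rank. If s is a purely imaginary eigenvalue of A = [[-F, -Tᵀ],[T, 0]] with eigenvector z = (x, λ), then x = 0 and λ = 0, a contradiction; hence A has no eigenvalues on the imaginary axis. -/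
/-!
Write an eigenpair `A z = s z` as `z = (x, y)`. The off-diagonal blocks `-Tᵀ` and `T` form a
skew-Hermitian matrix, so `Re (z* A z) = -Re (x* F x)`, whereas `Re (z* (s z)) = Re s ‖z‖² = 0`.
Positive definiteness of `F` forces `x = 0`; the first block row then reads `Tᵀ y = 0`, and the
full row rank of `T` forces `y = 0`.
-/

open Matrix

open scoped ComplexOrder

section Complexification

open Complex

variable {m n : Type*}

theorem Complex.vec_eq_zero_iff_re_im (z : n → ℂ) : z = 0 ↔ re ∘ z = 0 ∧ im ∘ z = 0 := by
  simp only [funext_iff, Function.comp_apply, Pi.zero_apply, Complex.ext_iff, zero_re, zero_im]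
  exact ⟨fun h => ⟨fun i => (h i).1, fun i => (h i).2⟩, fun h i => ⟨h.1 i, h.2 i⟩⟩

variable [Fintype n]

theorem Complex.re_star_dotProduct (z w : n → ℂ) :
    (star z ⬝ᵥ w).re = re ∘ z ⬝ᵥ re ∘ w + im ∘ z ⬝ᵥ im ∘ w := by
  simp [dotProduct, Complex.re_sum, Finset.sum_add_distrib]

theorem Matrix.re_comp_map_algebraMap_mulVec (M : Matrix m n ℝ) (z : n → ℂ) :
    re ∘ (M.map (algebraMap ℝ ℂ) *ᵥ z) = M *ᵥ (re ∘ z) := by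
  ext i
  simp [mulVec, dotProduct, Complex.re_sum]

theorem Matrix.im_comp_map_algebraMap_mulVec (M : Matrix m n ℝ) (z : n → ℂ) :
    im ∘ (M.map (algebraMap ℝ ℂ) *ᵥ z) = M *ᵥ (im ∘ z) := by
  ext i
  simp [mulVec, dotProduct, Complex.im_sum]

theorem Matrix.PosDef.map_algebraMap_complex {F : Matrix n n ℝ} (hF : F.PosDef) :
    (F.map (algebraMap ℝ ℂ)).PosDef := by
  have hherm : (F.map (algebraMap ℝ ℂ)).IsHermitian :=
    hF.isHermitian.map _ fun r => (Complex.conj_ofReal r).symm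
  refine posDef_iff_dotProduct_mulVec.mpr ⟨hherm, fun z hz => Complex.pos_iff.mpr
    ⟨?_, (hherm.im_star_dotProduct_mulVec_self z).symm⟩⟩
  rw [Complex.re_star_dotProduct, re_comp_map_algebraMap_mulVec, im_comp_map_algebraMap_mulVec]
  have hpos (v : n → ℝ) (hv : v ≠ 0) : 0 < v ⬝ᵥ F *ᵥ v := by
    simpa using hF.dotProduct_mulVec_pos hv
  have hnonneg (v : n → ℝ) : 0 ≤ v ⬝ᵥ F *ᵥ v := by
    simpa using hF.posSemidef.dotProduct_mulVec_nonneg v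
  rcases not_and_or.mp ((Complex.vec_eq_zero_iff_re_im z).not.mp hz) with hre | him
  · exact add_pos_of_pos_of_nonneg (hpos _ hre) (hnonneg _)
  · exact add_pos_of_nonneg_of_pos (hnonneg _) (hpos _ him)

theorem Matrix.mulVec_map_algebraMap_complex_injective {M : Matrix m n ℝ}
    (hM : Function.Injective M.mulVec) : Function.Injective (M.map (algebraMap ℝ ℂ)).mulVec := by
  refine (injective_iff_map_eq_zero (M.map (algebraMap ℝ ℂ)).mulVecLin).mpr fun z hz => ?_
  rw [mulVecLin_apply] at hz
  rw [Complex.vec_eq_zero_iff_re_im]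
  constructor <;> apply hM
  · rw [← re_comp_map_algebraMap_mulVec, hz, mulVec_zero]; ext; simp
  · rw [← im_comp_map_algebraMap_mulVec, hz, mulVec_zero]; ext; simp

end Complexification

theorem Matrix.mulVec_injective_of_rank_eq_card {m n K : Type*} [Fintype n] [Field K]
    {A : Matrix m n K} (hA : A.rank = Fintype.card n) : Function.Injective A.mulVec := by
  have hker := LinearMap.finrank_range_add_finrank_ker A.mulVecLin
  rw [← Matrix.rank, hA, Module.finrank_fintype_fun_eq_card, add_eq_left] at hker
  exact LinearMap.ker_eq_bot.mp (Submodule.finrank_eq_zero.mp hker)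

theorem Matrix.exists_mulVec_eq_smul_of_mem_spectrum {K n : Type*} [Field K] [Fintype n]
    [DecidableEq n] {A : Matrix n n K} {s : K} (hs : s ∈ spectrum K A) :
    ∃ z ≠ 0, A *ᵥ z = s • z := by
  rw [← spectrum_toLin', ← Module.End.hasEigenvalue_iff_mem_spectrum] at hs
  obtain ⟨z, hz⟩ := hs.exists_hasEigenvector
  exact ⟨z, hz.2, by simpa using hz.apply_eq_smul⟩

section Saddle

variable {𝕜 m n : Type*} [RCLike 𝕜] [Fintype m] [Fintype n]

theorem Matrix.re_star_dotProduct_fromBlocks_mulVec (F : Matrix n n 𝕜) (T : Matrix m n 𝕜)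
    (x : n → 𝕜) (y : m → 𝕜) :
    RCLike.re (star (x ⊕ᵥ y) ⬝ᵥ fromBlocks (-F) (-Tᴴ) T 0 *ᵥ (x ⊕ᵥ y)) =
      -RCLike.re (star x ⬝ᵥ F *ᵥ x) := by
  have hskew : star x ⬝ᵥ Tᴴ *ᵥ y = star (star y ⬝ᵥ T *ᵥ x) := by
    rw [star_dotProduct, star_mulVec, conjTranspose_conjTranspose, dotProduct_mulVec]
  simp only [fromBlocks_mulVec, Function.star_sumElim, sumElim_dotProduct_sumElim,
    Sum.elim_comp_inl, Sum.elim_comp_inr, neg_mulVec, zero_mulVec, add_zero, dotProduct_add,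
    dotProduct_neg, hskew, map_add, map_neg, RCLike.star_def, RCLike.conj_re]
  ring

theorem RCLike.re_star_dotProduct_smul_self {ι : Type*} [Fintype ι] {s : 𝕜}
    (hs : RCLike.re s = 0) (z : ι → 𝕜) : RCLike.re (star z ⬝ᵥ s • z) = 0 := by
  have hreal : RCLike.im (star z ⬝ᵥ z) = 0 :=
    RCLike.conj_eq_iff_im.mp (star_dotProduct z z).symm
  simp [dotProduct_smul, RCLike.mul_re, hs, hreal]

theorem Matrix.eq_zero_of_fromBlocks_mulVec_eq_smul {F : Matrix n n 𝕜} (hF : F.PosDef)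
    {T : Matrix m n 𝕜} (hT : Function.Injective Tᴴ.mulVec) {s : 𝕜} (hs : RCLike.re s = 0)
    {z : n ⊕ m → 𝕜} (hz : fromBlocks (-F) (-Tᴴ) T 0 *ᵥ z = s • z) : z = 0 := by
  rw [← Sum.elim_comp_inl_inr z] at hz ⊢
  set x := z ∘ Sum.inl
  set y := z ∘ Sum.inr
  have hx : x = 0 := by
    by_contra hx
    have := re_star_dotProduct_fromBlocks_mulVec F T x y
    rw [hz, RCLike.re_star_dotProduct_smul_self hs] at this
    linarith [hF.re_dotProduct_pos hx]
  have hy : Tᴴ *ᵥ y = Tᴴ *ᵥ 0 := by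
    ext i
    simpa [hx, fromBlocks_mulVec, neg_mulVec] using congrFun hz (Sum.inl i)
  rw [hx, hT hy, Sum.elim_zero_zero]

end Saddle

theorem no_imaginary_axis_eigenvalues (n m : ℕ)
    (F : Matrix (Fin n) (Fin n) ℝ) (hF : F.PosDef)
    (T : Matrix (Fin m) (Fin n) ℝ) (hT : T.rank = m)
    (A : Matrix (Fin n ⊕ Fin m) (Fin n ⊕ Fin m) ℝ)
    (hA : A = Matrix.fromBlocks (-F) (-Tᵀ) T 0) :
    (∀ (s : ℂ) (z : Fin n ⊕ Fin m → ℂ), s.re = 0 → z ≠ 0 →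
      (A.map (algebraMap ℝ ℂ)) *ᵥ z = s • z →
      ((fun i : Fin n => z (Sum.inl i)) = 0 ∧ (fun i : Fin m => z (Sum.inr i)) = 0) ∧ False) ∧
    ∀ s ∈ spectrum ℂ (A.map (algebraMap ℝ ℂ)), s.re ≠ 0 := by
  set φ := algebraMap ℝ ℂ
  have hconj : Function.Semiconj φ star star := fun r => (Complex.conj_ofReal r).symm
  have hAφ : A.map φ = fromBlocks (-F.map φ) (-(T.map φ)ᴴ) (T.map φ) 0 := by
    rw [hA, fromBlocks_map, ← conjTranspose_map _ hconj, conjTranspose_eq_transpose_of_trivial,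
      Matrix.map_neg _ (map_neg φ), Matrix.map_neg _ (map_neg φ), Matrix.map_zero _ (map_zero φ)]
  have hTφ : Function.Injective (T.map φ)ᴴ.mulVec := by
    rw [← conjTranspose_map _ hconj, conjTranspose_eq_transpose_of_trivial]
    exact mulVec_map_algebraMap_complex_injective
      (mulVec_injective_of_rank_eq_card (by rw [rank_transpose, hT, Fintype.card_fin]))
  have hno (s : ℂ) (z) (hs : s.re = 0) (hz : z ≠ 0) (h : A.map φ *ᵥ z = s • z) : False :=
    hz (eq_zero_of_fromBlocks_mulVec_eq_smul hF.map_algebraMap_complex hTφ hs (hAφ ▸ h))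
  refine ⟨fun s z hs hz h => (hno s z hs hz h).elim, fun s hs hre => ?_⟩
  obtain ⟨z, hz, h⟩ := exists_mulVec_eq_smul_of_mem_spectrum hs
  exact hno s z hre hz h
end

section
/- If f : ℝⁿ → ℝ is convex and differentiable with l-Lipschitz gradient (l > 0), then f is co-coercive: (∇f(x) − ∇f(y))ᵀ(x − y) ≥ (1/l)‖∇f(x) − ∇f(y)‖² for all x, y ∈ ℝⁿ. -/
/-!
Convexity gives the lower bound `f x + ⟪∇f x, y - x⟫ ≤ f y`, and the `K`-Lipschitz gradient the
upper bound `f y ≤ f x + ⟪∇f x, y - x⟫ + K/2 ‖y - x‖²`. Applying the lower bound at `x` and the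
upper bound at `y` to the gradient step `z = y - K⁻¹ (∇f y - ∇f x)` sharpens the lower bound by
`‖∇f y - ∇f x‖² / (2K)`; adding this sharpened bound to its mirror image with `x` and `y`
exchanged gives co-coercivity.
-/

open scoped RealInnerProductSpace NNReal

section Gradient

variable {E : Type*} [NormedAddCommGroup E] [InnerProductSpace ℝ E] [CompleteSpace E]
  {f : E → ℝ} {f' : E → E}

theorem HasGradientAt.hasDerivAt_add_smul {g x v : E} {t : ℝ}
    (hf : HasGradientAt f g (x + t • v)) :
    HasDerivAt (fun s : ℝ => f (x + s • v)) ⟪g, v⟫ t := by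
  have hline : HasDerivAt (fun s : ℝ => x + s • v) v t := by
    simpa using ((hasDerivAt_id t).smul_const v).const_add x
  simpa [Function.comp_def] using hf.hasFDerivAt.comp_hasDerivAt t hline

theorem ConvexOn.add_inner_le_of_hasGradientAt {s : Set E} {g x y : E}
    (hconv : ConvexOn ℝ s f) (hx : x ∈ s) (hy : y ∈ s) (hf : HasGradientAt f g x) :
    f x + ⟪g, y - x⟫ ≤ f y := by
  let line : ℝ →ᵃ[ℝ] E := AffineMap.lineMap x y
  have hline : ∀ t : ℝ, line t = x + t • (y - x) := fun t => by
    simp only [line, AffineMap.lineMap_apply_module]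
    module
  have hconv' : ConvexOn ℝ (line ⁻¹' s) (fun t => f (x + t • (y - x))) := by
    simpa only [Function.comp_def, hline] using hconv.comp_affineMap line
  have hderiv : HasDerivAt (fun t : ℝ => f (x + t • (y - x))) ⟪g, y - x⟫ 0 :=
    HasGradientAt.hasDerivAt_add_smul (by simpa using hf)
  have hslope := hconv'.le_slope_of_hasDerivAt (by simpa [hline] using hx)
    (by simpa [hline] using hy) one_pos hderiv
  simp only [slope_def_field, one_smul, zero_smul, add_zero, add_sub_cancel] at hslope
  linarith

theorem LipschitzWith.le_add_inner_add_sq_norm_of_hasGradientAt {K : ℝ≥0}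
    (hf : ∀ z, HasGradientAt f (f' z) z) (hK : LipschitzWith K f') (x y : E) :
    f y ≤ f x + ⟪f' x, y - x⟫ + K / 2 * ‖y - x‖ ^ 2 := by
  set v := y - x
  let φ : ℝ → ℝ := fun t => f (x + t • v) - t * ⟪f' x, v⟫ - K / 2 * t ^ 2 * ‖v‖ ^ 2
  have hφ : ∀ t, HasDerivAt φ (⟪f' (x + t • v) - f' x, v⟫ - K * t * ‖v‖ ^ 2) t := fun t => by
    refine ((((hf (x + t • v)).hasDerivAt_add_smul).sub ((hasDerivAt_id t).mul_const _)).sub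
      (((hasDerivAt_pow 2 t).const_mul (K / 2 : ℝ)).mul_const (‖v‖ ^ 2))).congr_deriv ?_
    rw [inner_sub_left]
    push_cast
    ring
  have hφ'_nonpos : ∀ t, 0 ≤ t → ⟪f' (x + t • v) - f' x, v⟫ - K * t * ‖v‖ ^ 2 ≤ 0 := by
    intro t ht
    have hlip : ‖f' (x + t • v) - f' x‖ ≤ K * (t * ‖v‖) := by
      simpa [dist_eq_norm, norm_smul, abs_of_nonneg ht] using hK.dist_le_mul (x + t • v) x
    have hcs := real_inner_le_norm (f' (x + t • v) - f' x) v
    nlinarith [norm_nonneg v]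
  have hanti : AntitoneOn φ (Set.Ici 0) :=
    antitoneOn_of_hasDerivWithinAt_nonpos (convex_Ici 0)
      (fun t _ => (hφ t).continuousAt.continuousWithinAt)
      (fun t _ => (hφ t).hasDerivWithinAt)
      (fun t ht => hφ'_nonpos t (le_of_lt (by simpa using ht)))
  have hφ₁ := hanti (Set.mem_Ici.2 le_rfl) (Set.mem_Ici.2 zero_le_one) zero_le_one
  simp only [φ, one_smul, zero_smul, add_zero, v, add_sub_cancel] at hφ₁
  linarith

theorem ConvexOn.add_inner_add_norm_sub_sq_div_le {K : ℝ≥0} (hconv : ConvexOn ℝ Set.univ f)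
    (hf : ∀ z, HasGradientAt f (f' z) z) (hK : LipschitzWith K f') (hK₀ : 0 < K) (x y : E) :
    f x + ⟪f' x, y - x⟫ + ‖f' y - f' x‖ ^ 2 / (2 * K) ≤ f y := by
  set g := f' y - f' x
  set z := y - (K : ℝ)⁻¹ • g
  have hlower := hconv.add_inner_le_of_hasGradientAt trivial trivial (hf x) (y := z)
  have hupper := hK.le_add_inner_add_sq_norm_of_hasGradientAt hf y z
  rw [show z - x = (y - x) - (K : ℝ)⁻¹ • g from sub_right_comm _ _ _, inner_sub_right,
    real_inner_smul_right] at hlower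
  rw [show z - y = -((K : ℝ)⁻¹ • g) from sub_sub_cancel_left _ _, inner_neg_right,
    real_inner_smul_right, norm_neg, norm_smul, Real.norm_of_nonneg (by positivity)] at hupper
  have hinner : (K : ℝ)⁻¹ * ⟪f' y, g⟫ - (K : ℝ)⁻¹ * ⟪f' x, g⟫ = (K : ℝ)⁻¹ * ‖g‖ ^ 2 := by
    rw [← mul_sub, ← inner_sub_left, real_inner_self_eq_norm_sq]
  have hsq : (K : ℝ) / 2 * ((K : ℝ)⁻¹ * ‖g‖) ^ 2 = ‖g‖ ^ 2 / (2 * K) := by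
    field_simp
  have hhalf : (K : ℝ)⁻¹ * ‖g‖ ^ 2 = 2 * (‖g‖ ^ 2 / (2 * K)) := by
    field_simp
  linarith

theorem ConvexOn.norm_sub_sq_div_le_inner_sub {K : ℝ≥0} (hconv : ConvexOn ℝ Set.univ f)
    (hf : ∀ z, HasGradientAt f (f' z) z) (hK : LipschitzWith K f') (hK₀ : 0 < K) (x y : E) :
    ‖f' x - f' y‖ ^ 2 / K ≤ ⟪f' x - f' y, x - y⟫ := by
  have hxy := hconv.add_inner_add_norm_sub_sq_div_le hf hK hK₀ x y
  have hyx := hconv.add_inner_add_norm_sub_sq_div_le hf hK hK₀ y x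
  rw [norm_sub_rev, ← neg_sub x y, inner_neg_right] at hxy
  rw [inner_sub_left]
  have hhalf : ‖f' x - f' y‖ ^ 2 / K = 2 * (‖f' x - f' y‖ ^ 2 / (2 * K)) := by
    field_simp
  linarith

end Gradient

theorem baillon_haddad_cocoercivity (n : ℕ) (l : ℝ) (hl : 0 < l)
    (f : EuclideanSpace ℝ (Fin n) → ℝ) (f' : EuclideanSpace ℝ (Fin n) → EuclideanSpace ℝ (Fin n))
    (hgrad : ∀ x, HasGradientAt f (f' x) x)
    (hconv : ConvexOn ℝ Set.univ f)
    (hlip : ∀ x y, ‖f' x - f' y‖ ≤ l * ‖x - y‖) :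
    ∀ x y : EuclideanSpace ℝ (Fin n),
      ⟪f' x - f' y, x - y⟫ ≥ (1 / l) * ‖f' x - f' y‖ ^ 2 := by
  intro x y
  lift l to ℝ≥0 using hl.le
  have hK : LipschitzWith l f' :=
    LipschitzWith.of_dist_le_mul fun a b => by simpa only [dist_eq_norm] using hlip a b
  rw [ge_iff_le, one_div_mul_eq_div]
  exact hconv.norm_sub_sq_div_le_inner_sub hgrad hK (by exact_mod_cast hl) x y
end
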